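/- In the group Z² * Z = ⟨a, b, c | [a,b]⟩, if t is an (a,b,c)-commutator, then the subgroup ⟨a, b, t⟩ factors as ⟨a, b⟩ * ⟨t⟩, i.e. it is isomorphic to Z² * Z. -/

import Mathlib

open Monoid

/-- The commutator convention of the paper: `[u,v] = u⁻¹ v⁻¹ u v`. -/
def pcomm {G : Type*} [Group G] (u v : G) : G := u⁻¹ * v⁻¹ * u * v

/-- `(a,b,c)`-commutators, defined inductively. -/
inductive IsABCCommutator {G : Type*} [Group G] (a b c : G) : G → Prop
  | base (x y z : ℤ) (hxy : |x| + |y| ≠ 0) (hz : z ≠ 0) :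
      IsABCCommutator a b c (pcomm (a ^ x * b ^ y) (c ^ z))
  | step (x y z : ℤ) (t : G) (hxy : |x| + |y| ≠ 0) (hz : z ≠ 0) :
      IsABCCommutator a b c t → IsABCCommutator a b c (pcomm (a ^ x * b ^ y) (t ^ z))

/-!
Substituting `c ↦ s` in `A ∗ ℤ` composes: the substitution for `[aˣbʸ, tᶻ]` is the one for `t`
after the one for `[aˣbʸ, cᶻ]`. By induction it therefore suffices to show that `c ↦ [m, cᶻ]` is
injective, where `m = aˣbʸ` may be any element of infinite order of any group `A`.

For this, let `A ∗ ℤ` act on its cosets `gA`, i.e. on the normal closure of `c`, the free product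
of the conjugates `c_u = u c u⁻¹` (`u ∈ A`): `A` shifts the indices and `c` multiplies by `c_1` on
the left, so that `[m, cᶻ]` multiplies by `h = c_{m⁻¹}^{-z} c_1^z`. Call a reduced word
`v`-anchored if it begins with `c_{vm⁻¹}^{-z} c_{vmⁿ}` for some `n ≥ 0` or with `c_v^{-z} c_{vmⁿ}`
for some `n < 0`. Nontrivial shifts turn `1`-anchored words into `v`-anchored ones with `v ≠ 1`,
and the nonzero powers of `h` turn these, as well as the words whose first exponent is not `-z`,
into `1`-anchored words. As `m` has infinite order, the two sets are disjoint, and the ping-pong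
lemma applies.
-/

open Multiplicative Cardinal Pointwise

namespace Monoid.Coprod

universe u

variable {M N : Type u} [Group M] [Group N]

instance instGroupCond : ∀ b : Bool, Group (cond b M N)
  | true => ‹Group M›
  | false => ‹Group N›

def toCoprodI : Coprod M N →* CoprodI fun b : Bool => cond b M N :=
  lift (CoprodI.of (M := fun b : Bool => cond b M N) (i := true))
    (CoprodI.of (M := fun b : Bool => cond b M N) (i := false))

theorem toCoprodI_injective : Function.Injective (toCoprodI (M := M) (N := N)) := by
  let back : (CoprodI fun b : Bool => cond b M N) →* Coprod M N :=
    CoprodI.lift fun | true => inl | false => inr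
  have hback : back.comp toCoprodI = .id _ := by
    ext <;> simp [back, toCoprodI]
  exact Function.LeftInverse.injective (g := back) (DFunLike.congr_fun hback)

theorem lift_injective_of_ping_pong {G α : Type*} [Group G] [MulAction G α]
    (f : M →* G) (g : N →* G) (hcard : 3 ≤ #M ∨ 3 ≤ #N) {X Y : Set α}
    (hX : X.Nonempty) (hY : Y.Nonempty) (hXY : Disjoint X Y)
    (hf : ∀ a ≠ 1, f a • Y ⊆ X) (hg : ∀ b ≠ 1, g b • X ⊆ Y) :
    Function.Injective (lift f g) := by
  let F : ∀ b, cond b M N →* G := fun | true => f | false => g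
  have hlift : lift f g = (CoprodI.lift F).comp toCoprodI := by
    ext <;> simp [F, toCoprodI]
  rw [hlift, MonoidHom.coe_comp]
  refine .comp (CoprodI.lift_injective_of_ping_pong F ?_ (fun b => cond b X Y) ?_ ?_ ?_)
    toCoprodI_injective
  · exact .inr (hcard.elim (fun h => ⟨true, h⟩) fun h => ⟨false, h⟩)
  · rintro (_ | _) <;> assumption
  · rintro (_ | _) (_ | _) h
    exacts [absurd rfl h, hXY.symm, hXY, absurd rfl h]
  · rintro (_ | _) (_ | _) h
    exacts [absurd rfl h, hg, hf, absurd rfl h]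

end Monoid.Coprod

theorem pow_succ_smul_subset {G α : Type*} [Monoid G] [MulAction G α] {g : G} {S T : Set α}
    (h : g • (S ∪ T) ⊆ T) (k : ℕ) : g ^ (k + 1) • S ⊆ T := by
  induction k with
  | zero => simpa using (Set.smul_set_mono Set.subset_union_left).trans h
  | succ k ih =>
    rw [pow_succ', mul_smul]
    exact (Set.smul_set_mono (ih.trans Set.subset_union_right)).trans h

theorem zpow_smul_subset_union {G α : Type*} [Group G] [MulAction G α] {g : G} {S T T' : Set α}
    (h : g • (S ∪ T) ⊆ T) (h' : g⁻¹ • (S ∪ T') ⊆ T') {n : ℤ} (hn : n ≠ 0) :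
    g ^ n • S ⊆ T ∪ T' := by
  obtain ⟨k, rfl | rfl⟩ := Int.eq_nat_or_neg n <;>
    obtain ⟨k, rfl⟩ := Nat.exists_eq_succ_of_ne_zero (by omega : k ≠ 0)
  · rw [zpow_natCast]
    exact (pow_succ_smul_subset h k).trans Set.subset_union_left
  · rw [zpow_neg, zpow_natCast, ← inv_pow]
    exact (pow_succ_smul_subset h' k).trans Set.subset_union_right

/-- The normal closure of `c` in `A ∗ ℤ`: the free product of the copies of `ℤ` generated by
the conjugates `c_u = u c u⁻¹`, `u ∈ A`; `letter u k` is `c_uᵏ`. -/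
abbrev FreeProdZ (A : Type*) : Type _ := CoprodI fun _ : A => Multiplicative ℤ

namespace FreeProdZ

variable {A : Type*}

def letter (u : A) (k : ℤ) : FreeProdZ A := CoprodI.of (i := u) (ofAdd k)

theorem letter_mul_letter (u : A) (k l : ℤ) : letter u k * letter u l = letter u (k + l) := by
  simp [letter, ← map_mul]

theorem letter_zero (u : A) : letter u 0 = 1 := by
  simp [letter]

theorem hom_ext {B : Type*} [Monoid B] {f g : FreeProdZ A →* B}
    (h : ∀ u, f (letter u 1) = g (letter u 1)) : f = g :=
  CoprodI.ext_hom _ _ fun u => MonoidHom.ext_mint (h u)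

def IsReduced (L : List (A × ℤ)) : Prop :=
  (∀ p ∈ L, p.2 ≠ 0) ∧ L.IsChain fun p q => p.1 ≠ q.1

def evalWord (L : List (A × ℤ)) : FreeProdZ A :=
  (L.map fun p => letter p.1 p.2).prod

@[simp]
theorem evalWord_nil : evalWord ([] : List (A × ℤ)) = 1 := rfl

@[simp]
theorem evalWord_cons (p : A × ℤ) (L : List (A × ℤ)) :
    evalWord (p :: L) = letter p.1 p.2 * evalWord L := rfl

theorem isReduced_cons_cons {u q : A} {k l : ℤ} {L : List (A × ℤ)} :
    IsReduced ((u, k) :: (q, l) :: L) ↔ k ≠ 0 ∧ u ≠ q ∧ IsReduced ((q, l) :: L) := by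
  simp only [IsReduced, List.mem_cons, forall_eq_or_imp, List.isChain_cons_cons]
  tauto

theorem isReduced_singleton {u : A} {k : ℤ} : IsReduced [(u, k)] ↔ k ≠ 0 := by
  simp [IsReduced]

def IsReduced.toWord {L : List (A × ℤ)} (h : IsReduced L) :
    CoprodI.Word fun _ : A => Multiplicative ℤ where
  toList := L.map fun p => ⟨p.1, ofAdd p.2⟩
  ne_one l hl := by
    obtain ⟨p, hp, rfl⟩ := List.mem_map.mp hl
    simpa using h.1 p hp
  chain_ne := (List.isChain_map _).2 h.2

theorem IsReduced.prod_toWord {L : List (A × ℤ)} (h : IsReduced L) :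
    h.toWord.prod = evalWord L := by
  simp only [CoprodI.Word.prod, IsReduced.toWord, evalWord, letter, List.map_map]
  rfl

theorem evalWord_injOn {L L' : List (A × ℤ)} (h : IsReduced L) (h' : IsReduced L')
    (he : evalWord L = evalWord L') : L = L' := by
  classical
  have hw : h.toWord = h'.toWord :=
    CoprodI.Word.equiv.symm.injective (by simpa [CoprodI.Word.equiv, h.prod_toWord, h'.prod_toWord])
  have hinj : Function.Injective fun p : A × ℤ =>
      (⟨p.1, ofAdd p.2⟩ : Σ _ : A, Multiplicative ℤ) := by
    rintro ⟨u, k⟩ ⟨u', k'⟩ h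
    simp_all
  exact List.map_injective_iff.mpr hinj (congrArg CoprodI.Word.toList hw)

section Prefixes

variable {x : FreeProdZ A} {u u' q q' : A} {k k' : ℤ}

theorem IsReduced.cons_of_cons {L : List (A × ℤ)} (h : IsReduced ((u, k) :: L))
    (hk' : k' ≠ 0) : IsReduced ((u, k') :: L) := by
  cases L with
  | nil => exact isReduced_singleton.2 hk'
  | cons p L =>
    obtain ⟨_, _⟩ := p
    rw [isReduced_cons_cons] at h ⊢
    exact ⟨hk', h.2⟩

def HeadsWith (x : FreeProdZ A) (u : A) (k : ℤ) : Prop :=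
  ∃ L, IsReduced ((u, k) :: L) ∧ x = evalWord ((u, k) :: L)

def StartsWith (x : FreeProdZ A) (u : A) (k : ℤ) (q : A) : Prop :=
  ∃ l L, IsReduced ((u, k) :: (q, l) :: L) ∧ x = evalWord ((u, k) :: (q, l) :: L)

theorem StartsWith.headsWith (h : StartsWith x u k q) : HeadsWith x u k :=
  let ⟨_, _, hL, hx⟩ := h; ⟨_, hL, hx⟩

theorem HeadsWith.unique (h : HeadsWith x u k) (h' : HeadsWith x u' k') : u = u' ∧ k = k' := by
  obtain ⟨L, hL, rfl⟩ := h
  obtain ⟨L', hL', he⟩ := h'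
  simpa using List.head_eq_of_cons_eq (evalWord_injOn hL hL' he)

theorem StartsWith.unique_snd (h : StartsWith x u k q) (h' : StartsWith x u' k' q') : q = q' := by
  obtain ⟨l, L, hL, rfl⟩ := h
  obtain ⟨l', L', hL', he⟩ := h'
  have hLL' := evalWord_injOn hL hL' he
  simp only [List.cons.injEq, Prod.mk.injEq] at hLL'
  exact hLL'.2.1.1

end Prefixes

variable [Group A]

def shiftHom (v : A) : FreeProdZ A →* FreeProdZ A :=
  CoprodI.lift fun u => CoprodI.of (M := fun _ : A => Multiplicative ℤ) (i := v * u)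

@[simp]
theorem shiftHom_letter (v u : A) (k : ℤ) : shiftHom v (letter u k) = letter (v * u) k :=
  CoprodI.lift_of (M := fun _ : A => Multiplicative ℤ) _ _

theorem shiftHom_comp (v w : A) : (shiftHom v).comp (shiftHom w) = shiftHom (v * w) :=
  hom_ext fun u => by simp [mul_assoc]

theorem shiftHom_one : shiftHom (1 : A) = .id _ :=
  hom_ext fun u => by simp

def shift : A →* MulAut (FreeProdZ A) where
  toFun v := (shiftHom v).toMulEquiv (shiftHom v⁻¹)
    (by rw [shiftHom_comp, inv_mul_cancel, shiftHom_one])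
    (by rw [shiftHom_comp, mul_inv_cancel, shiftHom_one])
  map_one' := MulEquiv.ext fun x => DFunLike.congr_fun shiftHom_one x
  map_mul' v w := MulEquiv.ext fun x => (DFunLike.congr_fun (shiftHom_comp v w) x).symm

@[simp]
theorem shift_letter (v u : A) (k : ℤ) : shift v (letter u k) = letter (v * u) k :=
  shiftHom_letter v u k

/-- The action of `A ∗ ℤ` on its left cosets `g A`, each of which meets `FreeProdZ A` in exactly
one point. -/
def action (A : Type*) [Group A] : Coprod A (Multiplicative ℤ) →* Equiv.Perm (FreeProdZ A) :=
  Coprod.lift ((MulAut.toPerm _).comp shift)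
    ((MulAction.toPermHom (FreeProdZ A) (FreeProdZ A)).comp
      (CoprodI.of (M := fun _ : A => Multiplicative ℤ) (i := 1)))

@[simp]
theorem action_inl (v : A) (x : FreeProdZ A) : action A (Coprod.inl v) x = shift v x := by
  simp [action]; rfl

@[simp]
theorem action_inr (k : ℤ) (x : FreeProdZ A) :
    action A (Coprod.inr (ofAdd k)) x = letter 1 k * x := by
  simp [action, letter]

theorem action_pcomm (m : A) (z : ℤ) (x : FreeProdZ A) :
    action A (pcomm (Coprod.inl m) (Coprod.inr (ofAdd z))) x =
      letter m⁻¹ (-z) * letter 1 z * x := by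
  rw [pcomm, ← map_inv, ← map_inv, ← ofAdd_neg]
  simp only [map_mul, Equiv.Perm.mul_apply, action_inl, action_inr]
  simp only [← MulAut.mul_apply, ← map_mul, inv_mul_cancel, map_one, MulAut.one_apply,
    shift_letter, mul_one, mul_assoc]

theorem action_pcomm_inv (m : A) (z : ℤ) (x : FreeProdZ A) :
    action A (pcomm (Coprod.inl m) (Coprod.inr (ofAdd z)))⁻¹ x =
      letter 1 (-z) * letter m⁻¹ z * x := by
  rw [map_inv, Equiv.Perm.inv_eq_iff_eq, action_pcomm]
  simp only [mul_assoc]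
  rw [← mul_assoc (letter 1 z), letter_mul_letter, add_neg_cancel, letter_zero, one_mul,
    ← mul_assoc, letter_mul_letter, neg_add_cancel, letter_zero, one_mul]

theorem shift_evalWord (v : A) (L : List (A × ℤ)) :
    shift v (evalWord L) = evalWord (L.map fun p => (v * p.1, p.2)) := by
  induction L with
  | nil => simp
  | cons p L ih => simp [ih]

theorem IsReduced.map_mul_left (v : A) {L : List (A × ℤ)} (h : IsReduced L) :
    IsReduced (L.map fun p => (v * p.1, p.2)) :=
  ⟨fun _ hp => by obtain ⟨q, hq, rfl⟩ := List.mem_map.mp hp; exact h.1 q hq,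
    (List.isChain_map _).2 (h.2.imp fun _ _ hne heq => hne (mul_left_cancel heq))⟩

section Cones

variable (z : ℤ) {x : FreeProdZ A} {u q p p' μ μ' : A} {k : ℤ}

def cone (p μ : A) : Set (FreeProdZ A) :=
  {x | ∃ n : ℤ, 0 < n ∧ StartsWith x p (-z) (p * μ ^ n)}

variable {z}

theorem HeadsWith.of_mem_cone (hx : x ∈ cone z p μ) : HeadsWith x p (-z) :=
  let ⟨_, _, h⟩ := hx; h.headsWith

theorem shift_mem_cone (v : A) (hx : x ∈ cone z p μ) : shift v x ∈ cone z (v * p) μ := by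
  obtain ⟨n, hn, l, L, hL, rfl⟩ := hx
  refine ⟨n, hn, l, L.map fun p => (v * p.1, p.2), ?_, ?_⟩
  · simpa [mul_assoc] using hL.map_mul_left v
  · simp [shift_evalWord, mul_assoc]

theorem disjoint_cone_of_ne (h : p ≠ p') : Disjoint (cone z p μ) (cone z p' μ') :=
  Set.disjoint_left.2 fun _ hx hx' => h (HeadsWith.of_mem_cone hx |>.unique (.of_mem_cone hx')).1

theorem disjoint_cone_cone_inv (hμ : ¬IsOfFinOrder μ) :
    Disjoint (cone z p μ) (cone z p' μ⁻¹) := by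
  refine Set.disjoint_left.2 fun x ⟨n, hn, hx⟩ ⟨n', hn', hx'⟩ => ?_
  obtain rfl := (hx.headsWith.unique hx'.headsWith).1
  have h := mul_left_cancel (hx.unique_snd hx')
  rw [inv_zpow', (injective_zpow_iff_not_isOfFinOrder.2 hμ).eq_iff] at h
  omega

theorem mul_mem_cone (hμ : ¬IsOfFinOrder μ) (hz : z ≠ 0) (hq : p * μ = q)
    (hx : HeadsWith x u k) (hcancel : u = q → k = -z → x ∈ cone z q μ) :
    letter p (-z) * letter q z * x ∈ cone z p μ := by
  subst hq
  have hpow : ∀ n : ℤ, n ≠ 0 → p ≠ p * μ ^ n := fun n hn h =>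
    hn <| injective_zpow_iff_not_isOfFinOrder.2 hμ (by simpa using h.symm)
  have hpμ : p ≠ p * μ := by simpa using hpow 1 one_ne_zero
  have hz' : -z ≠ 0 := neg_ne_zero.2 hz
  obtain ⟨L, hL, rfl⟩ := hx
  by_cases hu : u = p * μ
  · subst hu
    by_cases hk : k = -z
    · -- the first letter of `x` cancels against `c_{pμ}^z`
      obtain ⟨n, hn, l, L', hL', hxL⟩ := hcancel rfl hk
      have hq : p * μ ^ (n + 1) = p * μ * μ ^ n := by rw [add_comm, zpow_one_add, mul_assoc]
      refine ⟨n + 1, by omega, l, L', ?_, ?_⟩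
      · rw [isReduced_cons_cons] at hL' ⊢
        exact ⟨hz', hpow _ (by omega), hq ▸ hL'.2.2⟩
      · rw [hxL, hq]
        simp only [evalWord_cons, mul_assoc]
        rw [← mul_assoc (letter _ z), letter_mul_letter, add_neg_cancel, letter_zero, one_mul]
    · refine ⟨1, one_pos, z + k, L, ?_, ?_⟩
      · rw [isReduced_cons_cons, zpow_one]
        exact ⟨hz', hpμ, hL.cons_of_cons (by omega)⟩
      · simp only [evalWord_cons, zpow_one, mul_assoc]
        rw [← mul_assoc (letter _ z), letter_mul_letter]
  · refine ⟨1, one_pos, z, (u, k) :: L, ?_, ?_⟩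
    · rw [isReduced_cons_cons, isReduced_cons_cons, zpow_one]
      exact ⟨hz', hpμ, hz, Ne.symm hu, hL⟩
    · simp [mul_assoc]

end Cones

section PingPong

variable (z : ℤ) (m : A)

def anchored (v : A) : Set (FreeProdZ A) := cone z (v * m⁻¹) m ∪ cone z v m⁻¹

def pingA : Set (FreeProdZ A) :=
  {x | (∃ u k, k ≠ -z ∧ HeadsWith x u k) ∨ ∃ v ≠ 1, x ∈ anchored z m v}

variable {z m}

theorem letter_mem_pingA {u : A} {k : ℤ} (hk0 : k ≠ 0) (hk : k ≠ -z) :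
    letter u k ∈ pingA z m :=
  .inl ⟨u, k, hk, [], isReduced_singleton.2 hk0, by simp⟩

theorem shift_mem_anchored (v : A) {w : A} {x : FreeProdZ A} (hx : x ∈ anchored z m w) :
    shift v x ∈ anchored z m (v * w) := by
  rcases hx with hx | hx
  · exact .inl (mul_assoc v w m⁻¹ ▸ shift_mem_cone v hx)
  · exact .inr (shift_mem_cone v hx)

theorem disjoint_pingA_anchored_one (hm : ¬IsOfFinOrder m) :
    Disjoint (pingA z m) (anchored z m 1) := by
  rw [Set.disjoint_left]
  rintro x (⟨u, k, hk, hx⟩ | ⟨v, hv, hx | hx⟩) (hx' | hx')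
  · exact hk (hx.unique (.of_mem_cone hx')).2
  · exact hk (hx.unique (.of_mem_cone hx')).2
  · exact Set.disjoint_left.1 (disjoint_cone_of_ne (by simpa using hv)) hx hx'
  · exact Set.disjoint_left.1 (disjoint_cone_cone_inv hm) hx hx'
  · exact Set.disjoint_left.1 (disjoint_cone_cone_inv hm) hx' hx
  · exact Set.disjoint_left.1 (disjoint_cone_of_ne hv) hx hx'

theorem mul_mem_cone_of_mem_pingA (hm : ¬IsOfFinOrder m) (hz : z ≠ 0) {x : FreeProdZ A}
    (hx : x ∈ pingA z m ∪ cone z m⁻¹ m) :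
    letter m⁻¹ (-z) * letter 1 z * x ∈ cone z m⁻¹ m := by
  have h {u k} := mul_mem_cone (x := x) (u := u) (k := k) hm hz (inv_mul_cancel m)
  rcases hx with (⟨u, k, hk, hx⟩ | ⟨v, hv, hx | hx⟩) | hx
  · exact h hx fun _ hk' => absurd hk' hk
  · exact h (.of_mem_cone hx) fun hv1 _ => hv1 ▸ hx
  · exact h (.of_mem_cone hx) fun hv1 _ => absurd hv1 hv
  · exact h (.of_mem_cone hx) fun h1 _ => absurd h1 (inv_ne_one.2 fun h1 => hm (h1 ▸ .one))

theorem inv_mul_mem_cone_of_mem_pingA (hm : ¬IsOfFinOrder m) (hz : z ≠ 0) {x : FreeProdZ A}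
    (hx : x ∈ pingA z m ∪ cone z 1 m⁻¹) :
    letter 1 (-z) * letter m⁻¹ z * x ∈ cone z 1 m⁻¹ := by
  have h {u k} := mul_mem_cone (x := x) (u := u) (k := k) (isOfFinOrder_inv_iff.not.2 hm) hz
    (one_mul m⁻¹)
  rcases hx with (⟨u, k, hk, hx⟩ | ⟨v, hv, hx | hx⟩) | hx
  · exact h hx fun _ hk' => absurd hk' hk
  · exact h (.of_mem_cone hx) fun hv1 _ => absurd (mul_eq_right.1 hv1) hv
  · exact h (.of_mem_cone hx) fun hv1 _ => hv1 ▸ hx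
  · exact h (.of_mem_cone hx) fun h1 _ => absurd h1.symm (inv_ne_one.2 fun h1 => hm (h1 ▸ .one))

end PingPong

end FreeProdZ

section Substitution

variable {A : Type} [Group A]

def substGen (s : Coprod A (Multiplicative ℤ)) :
    Coprod A (Multiplicative ℤ) →* Coprod A (Multiplicative ℤ) :=
  Coprod.lift Coprod.inl (zpowersHom _ s)

theorem substGen_comp_substGen (s t : Coprod A (Multiplicative ℤ)) :
    (substGen t).comp (substGen s) = substGen (substGen t s) :=
  Coprod.hom_ext (by ext; simp [substGen]) (MonoidHom.ext_mint (by simp [substGen]))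

theorem substGen_pcomm (t : Coprod A (Multiplicative ℤ)) (m : A) (z : ℤ) :
    substGen t (pcomm (Coprod.inl m) (Coprod.inr (ofAdd z))) = pcomm (Coprod.inl m) (t ^ z) := by
  simp [substGen, pcomm]

open FreeProdZ in
theorem injective_substGen_pcomm {m : A} (hm : ¬IsOfFinOrder m) {z : ℤ} (hz : z ≠ 0) :
    Function.Injective (substGen (pcomm (Coprod.inl m) (Coprod.inr (ofAdd z)))) := by
  let := MulAction.compHom (FreeProdZ A) (action A)
  have hsmul : ∀ (g : Coprod A (Multiplicative ℤ)) x, g • x = action A g x := fun _ _ => rfl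
  unfold substGen
  refine Coprod.lift_injective_of_ping_pong (X := pingA z m) (Y := anchored z m 1) _ _ (.inr ?_)
    ⟨_, letter_mem_pingA (u := 1) hz (by omega)⟩
    ⟨letter m⁻¹ (-z) * letter 1 z * letter 1 z, .inl ?_⟩ (disjoint_pingA_anchored_one hm) ?_ ?_
  · simp
  · rw [one_mul]
    exact mul_mem_cone_of_mem_pingA hm hz (.inl (letter_mem_pingA hz (by omega)))
  · rintro v hv _ ⟨x, hx, rfl⟩
    simp only [hsmul, action_inl]
    exact .inr ⟨v, hv, by simpa using shift_mem_anchored v hx⟩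
  · intro n hn
    rw [zpowersHom_apply, anchored, one_mul]
    refine zpow_smul_subset_union ?_ ?_ (by simpa using hn) <;> rintro _ ⟨x, hx, rfl⟩
    · simp only [hsmul, action_pcomm]
      exact mul_mem_cone_of_mem_pingA hm hz hx
    · simp only [hsmul, action_pcomm_inv]
      exact inv_mul_mem_cone_of_mem_pingA hm hz hx

end Substitution

/-- In `Z² * Z = ⟨a,b,c | [a,b]⟩`, if `t` is an `(a,b,c)`-commutator then
`⟨a,b,t⟩` factors as `⟨a,b⟩ * ⟨t⟩ ≅ Z² * Z`: the natural homomorphism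
`Z² * Z → G` sending `a ↦ a`, `b ↦ b`, `c ↦ t` is injective. -/
theorem abcCommutator_free_factor
    (a b c t : Coprod (Multiplicative (ℤ × ℤ)) (Multiplicative ℤ))
    (ha : a = Coprod.inl (Multiplicative.ofAdd ((1, 0) : ℤ × ℤ)))
    (hb : b = Coprod.inl (Multiplicative.ofAdd ((0, 1) : ℤ × ℤ)))
    (hc : c = Coprod.inr (Multiplicative.ofAdd (1 : ℤ)))
    (ht : IsABCCommutator a b c t) :
    Function.Injective
      (Coprod.lift (Coprod.inl : Multiplicative (ℤ × ℤ) →* Coprod (Multiplicative (ℤ × ℤ)) (Multiplicative ℤ))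
        (zpowersHom _ t)) := by
  subst ha hb hc
  have hab (x y : ℤ) : (Coprod.inl (ofAdd ((1, 0) : ℤ × ℤ)) ^ x *
      Coprod.inl (ofAdd ((0, 1) : ℤ × ℤ)) ^ y : Coprod _ (Multiplicative ℤ)) =
        Coprod.inl (ofAdd (x, y)) := by
    simp only [← map_zpow (Coprod.inl (N := Multiplicative ℤ)), ← map_mul, ← ofAdd_zsmul,
      ← ofAdd_add]
    simp
  have hcz (z : ℤ) : (Coprod.inr (ofAdd (1 : ℤ)) : Coprod (Multiplicative (ℤ × ℤ)) _) ^ z =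
      Coprod.inr (ofAdd z) := by
    rw [← map_zpow, ← ofAdd_zsmul, smul_eq_mul, mul_one]
  have hinf {x y : ℤ} (hxy : |x| + |y| ≠ 0) : ¬IsOfFinOrder (ofAdd (x, y)) := by
    rw [isOfFinOrder_iff_eq_one, ofAdd_eq_one, Prod.mk_eq_zero]
    rintro ⟨rfl, rfl⟩
    simp at hxy
  induction ht with
  | base x y z hxy hz =>
    rw [hab, hcz]
    exact injective_substGen_pcomm (hinf hxy) hz
  | step x y z t hxy hz _ ih =>
    rw [hab, ← substGen_pcomm]
    change Function.Injective (substGen _)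
    rw [← substGen_comp_substGen, MonoidHom.coe_comp]
    exact ih.comp (injective_substGen_pcomm (hinf hxy) hz)
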